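/- Assume n ≥ 2 and that K : ℝⁿ → ℝ is a bounded C² function with bounded gradient satisfying: (a) there exists η > 0 such that ⟨∇K(x), x⟩ < 0 whenever |x| ≥ η; (b) the function x ↦ ⟨∇K(x), x⟩ is integrable on ℝⁿ; and (c) ∫_{ℝⁿ} ⟨∇K(x), x⟩ dx < 0. Then there exists R > 0 such that for every (μ, ξ) ∈ ℝ × ℝⁿ with |μ| + |ξ| ≥ R one has ⟨∇Γ(μ, ξ), (μ, ξ)⟩ < 0, where ∇Γ denotes the gradient of Γ in the n+1 variables (μ, ξ). -/

import Mathlib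

/-!
Write `h x = ⟪∇K x, x⟫`. Since `z₀^{p+1} = α^{p+1} (1 + ‖y‖²)^{-n}`, differentiating under the
integral sign gives `⟨∇Γ(μ,ξ), (μ,ξ)⟩ = α^{p+1}/(p+1) ∫ h(μy+ξ) (1 + ‖y‖²)^{-n} dy`.
For `μ = 0` this is `h ξ` times a positive integral. For `μ ≠ 0` the substitution `x = μy + ξ`
makes it a positive multiple of `∫ h x (μ² + ‖x - ξ‖²)^{-n} dx`. Choose `T ≥ η` with
`∫_{‖x‖ ≤ T} h < 0`; off that ball `h < 0`, and on it
`μ² + ‖x - ξ‖² = (μ² + ‖ξ‖²) - 2⟪x, ξ⟫ + ‖x‖²` is, for large `μ² + ‖ξ‖²`, so nearly constant that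
the weight varies by a factor at most `1 + ε`. The positive part of `h` then cannot outweigh its
negative part.
-/

open MeasureTheory
open scoped RealInnerProductSpace

noncomputable def z0 (n : ℕ) (γ α : ℝ) (y : EuclideanSpace ℝ (Fin n)) : ℝ :=
  α * (1 + ‖y‖ ^ 2) ^ (-(((n : ℝ) - 2 * γ) / 2))

noncomputable def Gam (n : ℕ) (γ α p : ℝ) (K : EuclideanSpace ℝ (Fin n) → ℝ)
    (μ : ℝ) (ξ : EuclideanSpace ℝ (Fin n)) : ℝ :=
  (1 / (p + 1)) * ∫ y, K (μ • y + ξ) * z0 n γ α y ^ (p + 1)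

open Filter Metric Module Topology

section BubbleWeight

variable {E : Type*} [NormedAddCommGroup E]

noncomputable def bubbleWeight (k : ℕ) (y : E) : ℝ :=
  ((1 + ‖y‖ ^ 2) ^ k)⁻¹

lemma bubbleWeight_pos (k : ℕ) (y : E) : 0 < bubbleWeight k y := by
  unfold bubbleWeight
  positivity

@[fun_prop]
lemma continuous_bubbleWeight (k : ℕ) : Continuous (bubbleWeight k : E → ℝ) :=
  Continuous.inv₀ (by fun_prop) fun y => by positivity

lemma bubbleWeight_le_rpow (k : ℕ) (y : E) :
    bubbleWeight k y ≤ 2 ^ k * (1 + ‖y‖) ^ (-(2 * k : ℝ)) := by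
  have hy : 0 < 1 + ‖y‖ := by positivity
  have hsq : (1 + ‖y‖) ^ 2 ≤ 2 * (1 + ‖y‖ ^ 2) := by nlinarith [sq_nonneg (‖y‖ - 1)]
  rw [Real.rpow_neg hy.le, show (2 * k : ℝ) = ((2 * k : ℕ) : ℝ) by push_cast; ring,
    Real.rpow_natCast, ← div_eq_mul_inv, bubbleWeight, le_div_iff₀ (by positivity), pow_mul,
    ← div_eq_inv_mul, div_le_iff₀ (by positivity), mul_comm, ← mul_pow]
  exact pow_le_pow_left₀ (by positivity) (hsq.trans_eq (mul_comm _ _)) k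

variable [NormedSpace ℝ E] [FiniteDimensional ℝ E] [MeasurableSpace E] [BorelSpace E]
  (ν : Measure E) [ν.IsAddHaarMeasure] {k : ℕ}

lemma integrable_bubbleWeight (hk : finrank ℝ E < 2 * k) : Integrable (bubbleWeight k) ν := by
  refine ((integrable_one_add_norm (r := 2 * k) (by exact_mod_cast hk)).const_mul (2 ^ k)).mono'
    (continuous_bubbleWeight k).aestronglyMeasurable (ae_of_all _ fun y => ?_)
  rw [Real.norm_of_nonneg (bubbleWeight_pos k y).le]
  exact bubbleWeight_le_rpow k y

lemma integrable_one_add_norm_mul_bubbleWeight (hk : finrank ℝ E + 1 < 2 * k) :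
    Integrable (fun y => (1 + ‖y‖) * bubbleWeight k y) ν := by
  have hr : (finrank ℝ E : ℝ) < 2 * k - 1 := by
    have : ((finrank ℝ E + 1 : ℕ) : ℝ) < ((2 * k : ℕ) : ℝ) := by exact_mod_cast hk
    push_cast at this
    linarith
  refine ((integrable_one_add_norm hr).const_mul (2 ^ k)).mono'
    (by fun_prop : Continuous fun y : E => (1 + ‖y‖) * bubbleWeight k y).aestronglyMeasurable
    (ae_of_all _ fun y => ?_)
  have hy : 0 < 1 + ‖y‖ := by positivity
  rw [Real.norm_of_nonneg (mul_nonneg hy.le (bubbleWeight_pos k y).le),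
    show -(2 * k - 1 : ℝ) = 1 + -(2 * k : ℝ) by ring, Real.rpow_add hy, Real.rpow_one,
    mul_left_comm]
  exact mul_le_mul_of_nonneg_left (bubbleWeight_le_rpow k y) hy.le

lemma integral_bubbleWeight_pos (hk : finrank ℝ E < 2 * k) : 0 < ∫ y, bubbleWeight k y ∂ν := by
  rw [integral_pos_iff_support_of_nonneg (fun y => (bubbleWeight_pos k y).le)
    (integrable_bubbleWeight ν hk)]
  simp [Function.support, (bubbleWeight_pos k _).ne', NeZero.ne ν]

end BubbleWeight

section ChangeOfVariables

variable {E F : Type*} [NormedAddCommGroup E] [NormedSpace ℝ E] [MeasurableSpace E]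
  [BorelSpace E] [FiniteDimensional ℝ E] (ν : Measure E) [ν.IsAddHaarMeasure]
  [NormedAddCommGroup F] [NormedSpace ℝ F]

lemma integral_comp_smul_add (f : E → F) (c : ℝ) (ξ : E) :
    ∫ y, f (c • y + ξ) ∂ν = |(c ^ finrank ℝ E)⁻¹| • ∫ x, f x ∂ν := by
  rw [Measure.integral_comp_smul ν (fun x => f (x + ξ)) c, integral_add_right_eq_self]

end ChangeOfVariables

section DifferentiationUnderIntegral

variable {E : Type*} [NormedAddCommGroup E] [NormedSpace ℝ E]

lemma norm_fderiv_eq_norm_gradient {F : Type*} [NormedAddCommGroup F] [InnerProductSpace ℝ F]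
    [CompleteSpace F] (f : F → ℝ) (x : F) : ‖fderiv ℝ f x‖ = ‖gradient f x‖ := by
  rw [← toDual_gradient, LinearIsometryEquiv.norm_map]

open ContinuousLinearMap in
lemma norm_toSpanSingleton_coprod_id_le (y : E) :
    ‖(toSpanSingleton ℝ y).coprod (.id ℝ E)‖ ≤ 1 + ‖y‖ := by
  refine opNorm_le_bound _ (by positivity) fun q => ?_
  calc ‖q.1 • y + q.2‖ ≤ ‖q.1‖ * ‖y‖ + ‖q.2‖ := (norm_add_le _ _).trans_eq (by rw [norm_smul])
    _ ≤ ‖q‖ * ‖y‖ + ‖q‖ := by gcongr; exacts [norm_fst_le q, norm_snd_le q]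
    _ = (1 + ‖y‖) * ‖q‖ := by ring

variable [FiniteDimensional ℝ E] [MeasurableSpace E] [BorelSpace E] {ν : Measure E} {K w : E → ℝ}

open ContinuousLinearMap in
lemma fderiv_integral_comp_smul_add_apply_self (hK : ContDiff ℝ 1 K)
    (hKb : ∃ C, ∀ x, |K x| ≤ C) (hK' : ∃ C, ∀ x, ‖fderiv ℝ K x‖ ≤ C)
    (hw : AEStronglyMeasurable w ν) (hw' : Integrable (fun y => (1 + ‖y‖) * w y) ν)
    (μ : ℝ) (ξ : E) :
    fderiv ℝ (fun q : ℝ × E => ∫ y, K (q.1 • y + q.2) * w y ∂ν) (μ, ξ) (μ, ξ)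
      = ∫ y, fderiv ℝ K (μ • y + ξ) (μ • y + ξ) * w y ∂ν := by
  obtain ⟨CK, hCK⟩ := hKb
  obtain ⟨C, hC⟩ := hK'
  have hC0 : 0 ≤ C := (norm_nonneg _).trans (hC 0)
  set L : E → ℝ × E →L[ℝ] E := fun y => (toSpanSingleton ℝ y).coprod (.id ℝ E)
  set F' : ℝ × E → E → ℝ × E →L[ℝ] ℝ := fun q y => w y • (fderiv ℝ K (q.1 • y + q.2)).comp (L y)
  have hF'_le (q : ℝ × E) (y : E) : ‖F' q y‖ ≤ C * ‖(1 + ‖y‖) * w y‖ := by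
    rw [norm_smul, norm_mul, Real.norm_of_nonneg (by positivity : 0 ≤ 1 + ‖y‖)]
    calc ‖w y‖ * ‖(fderiv ℝ K (q.1 • y + q.2)).comp (L y)‖
        ≤ ‖w y‖ * (C * (1 + ‖y‖)) := by
          gcongr
          exact (opNorm_comp_le _ _).trans
            (mul_le_mul (hC _) (norm_toSpanSingleton_coprod_id_le y) (norm_nonneg _) hC0)
      _ = C * ((1 + ‖y‖) * ‖w y‖) := by ring
  have hF'_meas (q : ℝ × E) : AEStronglyMeasurable (F' q) ν := by
    refine hw.smul (Continuous.aestronglyMeasurable ?_)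
    exact ((hK.continuous_fderiv one_ne_zero).comp (by fun_prop)).clm_comp
      ((toSpanSingletonLIE ℝ E).continuous.continuousLinearMapCoprod continuous_const)
  have hbound : Integrable (fun y => C * ‖(1 + ‖y‖) * w y‖) ν := hw'.norm.const_mul C
  have hw_int : Integrable w ν := hw'.mono hw (ae_of_all _ fun y => by
    rw [norm_mul]
    exact le_mul_of_one_le_left (norm_nonneg _)
      (by rw [Real.norm_of_nonneg (by positivity)]; linarith [norm_nonneg y]))
  have hderiv : HasFDerivAt (fun q : ℝ × E => ∫ y, K (q.1 • y + q.2) * w y ∂ν)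
      (∫ y, F' (μ, ξ) y ∂ν) (μ, ξ) :=
    hasFDerivAt_integral_of_dominated_of_fderiv_le Filter.univ_mem
      (Eventually.of_forall fun q =>
        (hK.continuous.comp (by fun_prop)).aestronglyMeasurable.mul hw)
      (hw_int.bdd_mul (hK.continuous.comp (by fun_prop)).aestronglyMeasurable
        (ae_of_all _ fun y => (Real.norm_eq_abs _).trans_le (hCK _)))
      (hF'_meas _) (ae_of_all _ fun y q _ => hF'_le q y) hbound
      (ae_of_all _ fun y q _ =>
        ((hK.differentiable one_ne_zero _).hasFDerivAt.comp q (L y).hasFDerivAt).mul_const (w y))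
  rw [hderiv.fderiv, integral_apply (hbound.mono' (hF'_meas _) (ae_of_all _ (hF'_le _)))]
  simp [F', L, mul_comm]

end DifferentiationUnderIntegral

section Sign

lemma eventually_setIntegral_closedBall_lt {α : Type*} [PseudoMetricSpace α] [MeasurableSpace α]
    [OpensMeasurableSpace α] {ν : Measure α} {h : α → ℝ} (hh : Integrable h ν) {c : ℝ}
    (hc : ∫ x, h x ∂ν < c) (x₀ : α) :
    ∀ᶠ T in atTop, ∫ x in closedBall x₀ T, h x ∂ν < c := by
  have hlim := tendsto_setIntegral_of_monotone (s := fun T : ℝ => closedBall x₀ T)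
    (fun _ => measurableSet_closedBall) (fun _ _ hab => closedBall_subset_closedBall hab)
    hh.integrableOn
  rw [Set.iUnion_eq_univ_iff.2 fun y => ⟨dist y x₀, mem_closedBall.2 le_rfl⟩,
    setIntegral_univ] at hlim
  exact hlim.eventually_lt_const hc

lemma integral_mul_neg_of_weight_mem_Icc {α : Type*} [MeasurableSpace α] {ν : Measure α}
    {h W : α → ℝ} {B : Set α} (hB : MeasurableSet B) (hh : Integrable h ν)
    (hhW : Integrable (fun x => h x * W x) ν) (hW : ∀ x, 0 ≤ W x) (hout : ∀ x ∉ B, h x ≤ 0)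
    {c ε : ℝ} (hc : 0 < c) (hWB : ∀ x ∈ B, W x ∈ Set.Icc c ((1 + ε) * c))
    (hhB : ∫ x in B, h x ∂ν + ε * ∫ x in B, max (h x) 0 ∂ν < 0) :
    ∫ x, h x * W x ∂ν < 0 := by
  have hpt (x : α) : h x * W x ≤ B.indicator (fun x => c * (h x + ε * max (h x) 0)) x := by
    by_cases hx : x ∈ B
    · obtain ⟨hcW, hWc⟩ := hWB x hx
      rw [Set.indicator_of_mem hx]
      rcases le_total 0 (h x) with hpos | hneg
      · rw [max_eq_left hpos]; nlinarith
      · rw [max_eq_right hneg]; nlinarith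
    · rw [Set.indicator_of_notMem hx]
      exact mul_nonpos_of_nonpos_of_nonneg (hout x hx) (hW x)
  have hpos := hh.pos_part.const_mul ε
  calc ∫ x, h x * W x ∂ν
      ≤ ∫ x, B.indicator (fun x => c * (h x + ε * max (h x) 0)) x ∂ν :=
        integral_mono hhW (((hh.add hpos).const_mul c).indicator hB) hpt
    _ = c * (∫ x in B, h x ∂ν + ε * ∫ x in B, max (h x) 0 ∂ν) := by
        rw [integral_indicator hB, integral_const_mul,
          integral_add hh.integrableOn hpos.integrableOn, integral_const_mul]
    _ < 0 := mul_neg_of_pos_of_neg hc hhB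

lemma eventually_sq_add_pow_le (T : ℝ) {ε : ℝ} (hε : 0 < ε) (k : ℕ) :
    ∀ᶠ r in atTop, 0 < r * (r - 2 * T) ∧ ((r + T) ^ 2) ^ k ≤ (1 + ε) * (r * (r - 2 * T)) ^ k := by
  have hlim : Tendsto (fun r : ℝ => ((1 + T * r⁻¹) ^ 2 / (1 - 2 * T * r⁻¹)) ^ k) atTop (𝓝 1) := by
    have hcont : ContinuousAt (fun u : ℝ => ((1 + T * u) ^ 2 / (1 - 2 * T * u)) ^ k) 0 := by
      fun_prop (disch := norm_num)
    simpa [Function.comp_def] using hcont.tendsto.comp tendsto_inv_atTop_zero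
  filter_upwards [hlim.eventually (gt_mem_nhds (by linarith : (1 : ℝ) < 1 + ε)),
    eventually_gt_atTop (max 0 (2 * T))] with r hr hrT
  have hr0 : 0 < r := (le_max_left _ _).trans_lt hrT
  have hpos : 0 < r * (r - 2 * T) := mul_pos hr0 (by linarith [le_max_right 0 (2 * T)])
  have heq : (1 + T * r⁻¹) ^ 2 / (1 - 2 * T * r⁻¹) = (r + T) ^ 2 / (r * (r - 2 * T)) := by
    have : r - 2 * T ≠ 0 := by linarith [le_max_right 0 (2 * T)]
    field_simp
  rw [heq, div_pow, div_lt_iff₀ (pow_pos hpos k)] at hr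
  exact ⟨hpos, hr.le⟩

variable {E : Type*} [NormedAddCommGroup E] [InnerProductSpace ℝ E]

lemma sq_add_norm_sub_sq_mem_Icc {x ξ : E} {μ T r : ℝ} (hx : ‖x‖ ≤ T) (hr0 : 0 ≤ r)
    (hr : μ ^ 2 + ‖ξ‖ ^ 2 = r ^ 2) :
    μ ^ 2 + ‖x - ξ‖ ^ 2 ∈ Set.Icc (r * (r - 2 * T)) ((r + T) ^ 2) := by
  have hξ : ‖ξ‖ ≤ r := by nlinarith [norm_nonneg ξ]
  have hinner : |⟪x, ξ⟫| ≤ T * r := (abs_real_inner_le_norm x ξ).trans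
    (mul_le_mul hx hξ (norm_nonneg _) ((norm_nonneg _).trans hx))
  have hexp : μ ^ 2 + ‖x - ξ‖ ^ 2 = r ^ 2 - 2 * ⟪x, ξ⟫ + ‖x‖ ^ 2 := by
    rw [norm_sub_sq_real]; linarith
  rw [hexp]
  constructor <;> nlinarith [abs_le.1 hinner, norm_nonneg x]

variable [FiniteDimensional ℝ E] [MeasurableSpace E] [BorelSpace E] {ν : Measure E}
  [ν.IsAddHaarMeasure] {h : E → ℝ} {k : ℕ}

lemma integral_comp_smul_add_mul_bubbleWeight_neg (hh : Integrable h ν) {T ε : ℝ} (hT : 0 ≤ T)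
    (hout : ∀ x ∉ closedBall (0 : E) T, h x ≤ 0)
    (hB : ∫ x in closedBall (0 : E) T, h x ∂ν
      + ε * ∫ x in closedBall (0 : E) T, max (h x) 0 ∂ν < 0)
    {μ : ℝ} (hμ : μ ≠ 0) (ξ : E) {r : ℝ} (hr0 : 0 ≤ r) (hr : μ ^ 2 + ‖ξ‖ ^ 2 = r ^ 2)
    (hrT : 0 < r * (r - 2 * T)) (hpinch : ((r + T) ^ 2) ^ k ≤ (1 + ε) * (r * (r - 2 * T)) ^ k) :
    ∫ y, h (μ • y + ξ) * bubbleWeight k y ∂ν < 0 := by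
  set W : E → ℝ := fun x => ((μ ^ 2 + ‖x - ξ‖ ^ 2) ^ k)⁻¹ with hW
  have hμ2 : 0 < μ ^ 2 := by positivity
  have hrT0 : 0 < r + T := by
    have : r ≠ 0 := by rintro rfl; simp at hrT
    positivity
  have hcomp (y : E) :
      h (μ • y + ξ) * bubbleWeight k y = (μ ^ 2) ^ k * (h (μ • y + ξ) * W (μ • y + ξ)) := by
    simp only [hW, bubbleWeight, add_sub_cancel_right, norm_smul, Real.norm_eq_abs, mul_pow,
      sq_abs]
    rw [show μ ^ 2 + μ ^ 2 * ‖y‖ ^ 2 = μ ^ 2 * (1 + ‖y‖ ^ 2) by ring, mul_pow, mul_inv]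
    field_simp
  have hhW : Integrable (fun x => h x * W x) ν := by
    refine hh.mul_bdd (c := ((μ ^ 2) ^ k)⁻¹)
      (Continuous.aestronglyMeasurable (Continuous.inv₀ (by fun_prop) fun x => by positivity))
      (ae_of_all _ fun x => ?_)
    rw [Real.norm_of_nonneg (by positivity)]
    exact inv_anti₀ (by positivity) (pow_le_pow_left₀ hμ2.le (by simp) k)
  simp_rw [hcomp, integral_const_mul, integral_comp_smul_add ν (fun x => h x * W x), smul_eq_mul]
  refine mul_neg_of_pos_of_neg (by positivity) (mul_neg_of_pos_of_neg (by positivity) ?_)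
  refine integral_mul_neg_of_weight_mem_Icc measurableSet_closedBall hh hhW
    (fun x => by simp only [hW]; positivity) hout (c := (((r + T) ^ 2) ^ k)⁻¹) (by positivity)
    (fun x hx => ?_) hB
  obtain ⟨hlow, hup⟩ := sq_add_norm_sub_sq_mem_Icc (mem_closedBall_zero_iff.1 hx) hr0 hr
  refine ⟨inv_anti₀ (by positivity) (pow_le_pow_left₀ (by positivity) hup k), ?_⟩
  calc W x ≤ ((r * (r - 2 * T)) ^ k)⁻¹ :=
        inv_anti₀ (pow_pos hrT k) (pow_le_pow_left₀ hrT.le hlow k)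
    _ ≤ (1 + ε) * (((r + T) ^ 2) ^ k)⁻¹ := by
        rw [← div_eq_mul_inv, le_div_iff₀ (by positivity), ← div_eq_inv_mul,
          div_le_iff₀ (pow_pos hrT k)]
        exact hpinch

theorem exists_integral_comp_smul_add_mul_bubbleWeight_neg (hk : finrank ℝ E < 2 * k)
    (hh : Integrable h ν) {η : ℝ} (hη : ∀ x, η ≤ ‖x‖ → h x < 0) (hneg : ∫ x, h x ∂ν < 0) :
    ∃ R > 0, ∀ (μ : ℝ) (ξ : E), R ≤ |μ| + ‖ξ‖ →
      ∫ y, h (μ • y + ξ) * bubbleWeight k y ∂ν < 0 := by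
  obtain ⟨T, ⟨hT0, hηT⟩, hT⟩ := (((eventually_ge_atTop 0).and (eventually_ge_atTop η)).and
    (eventually_setIntegral_closedBall_lt hh hneg (0 : E))).exists
  have hout (x : E) (hx : x ∉ closedBall (0 : E) T) : h x ≤ 0 :=
    (hη x (hηT.trans (not_le.1 (mt mem_closedBall_zero_iff.2 hx)).le)).le
  obtain ⟨ε, hε, hεB⟩ := exists_pos_mul_lt (neg_pos.2 hT)
    (∫ x in closedBall (0 : E) T, max (h x) 0 ∂ν)
  obtain ⟨R₀, hR₀⟩ := eventually_atTop.1 (eventually_sq_add_pow_le T hε k)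
  refine ⟨max (max (2 * R₀) η) 1, lt_max_of_lt_right one_pos, fun μ ξ hR => ?_⟩
  have hR' := (le_max_left _ _).trans ((le_max_left _ _).trans hR)
  rcases eq_or_ne μ 0 with rfl | hμ
  · simp only [zero_smul, zero_add, integral_const_mul]
    refine mul_neg_of_neg_of_pos (hη ξ ?_) (integral_bubbleWeight_pos ν hk)
    simpa using (le_max_right _ _).trans ((le_max_left _ _).trans hR)
  · set r := √(μ ^ 2 + ‖ξ‖ ^ 2)
    have hμr : |μ| ≤ r := Real.abs_le_sqrt (by nlinarith [norm_nonneg ξ])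
    have hξr : ‖ξ‖ ≤ r := Real.le_sqrt_of_sq_le (by nlinarith)
    obtain ⟨hrT, hpinch⟩ := hR₀ r (by linarith)
    exact integral_comp_smul_add_mul_bubbleWeight_neg hh hT0 hout (by linarith) hμ ξ
      (Real.sqrt_nonneg _) (Real.sq_sqrt (by positivity)).symm hrT hpinch

end Sign

lemma z0_rpow_eq {n : ℕ} {γ p α : ℝ} (hγn : γ < (n : ℝ) / 2)
    (hp : p = ((n : ℝ) + 2 * γ) / ((n : ℝ) - 2 * γ)) (hα : 0 ≤ α)
    (y : EuclideanSpace ℝ (Fin n)) :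
    z0 n γ α y ^ (p + 1) = α ^ (p + 1) * bubbleWeight n y := by
  have hy : 0 < 1 + ‖y‖ ^ 2 := by positivity
  have hexp : -(((n : ℝ) - 2 * γ) / 2) * (p + 1) = -(n : ℝ) := by
    rw [hp]
    field_simp [show (n : ℝ) - 2 * γ ≠ 0 by linarith]
    ring
  rw [z0, bubbleWeight, Real.mul_rpow hα (Real.rpow_nonneg hy.le _), ← Real.rpow_mul hy.le, hexp,
    Real.rpow_neg hy.le, Real.rpow_natCast]

lemma Gam_eq_integral {n : ℕ} {γ p α : ℝ} (hγn : γ < (n : ℝ) / 2)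
    (hp : p = ((n : ℝ) + 2 * γ) / ((n : ℝ) - 2 * γ)) (hα : 0 ≤ α)
    (K : EuclideanSpace ℝ (Fin n) → ℝ) (μ : ℝ) (ξ : EuclideanSpace ℝ (Fin n)) :
    Gam n γ α p K μ ξ = ∫ y, K (μ • y + ξ) * (α ^ (p + 1) / (p + 1) * bubbleWeight n y) := by
  simp_rw [Gam, z0_rpow_eq hγn hp hα, ← integral_const_mul]
  congr 1 with y
  ring

theorem stmt6_general (n : ℕ) (hn : 2 ≤ n) (γ : ℝ) (hγn : γ < (n : ℝ) / 2)
    (p : ℝ) (hp : p = ((n : ℝ) + 2 * γ) / ((n : ℝ) - 2 * γ))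
    (α : ℝ) (hα : 0 < α)
    (K : EuclideanSpace ℝ (Fin n) → ℝ) (hK : ContDiff ℝ 2 K)
    (hKb : ∃ C, ∀ x, |K x| ≤ C)
    (hKgb : ∃ C, ∀ x, ‖gradient K x‖ ≤ C)
    (η : ℝ)
    (ha : ∀ x : EuclideanSpace ℝ (Fin n), η ≤ ‖x‖ → ⟪gradient K x, x⟫ < 0)
    (hb : Integrable (fun x : EuclideanSpace ℝ (Fin n) => ⟪gradient K x, x⟫))
    (hc : (∫ x : EuclideanSpace ℝ (Fin n), ⟪gradient K x, x⟫) < 0) :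
    ∃ R > 0, ∀ (μ : ℝ) (ξ : EuclideanSpace ℝ (Fin n)), R ≤ |μ| + ‖ξ‖ →
      fderiv ℝ (fun q : ℝ × EuclideanSpace ℝ (Fin n) => Gam n γ α p K q.1 q.2) (μ, ξ) (μ, ξ)
        < 0 := by
  have hdim : finrank ℝ (EuclideanSpace ℝ (Fin n)) + 1 < 2 * n := by
    rw [finrank_euclideanSpace_fin]; omega
  have hp1 : 0 < p + 1 := by
    have hd : 0 < (n : ℝ) - 2 * γ := by linarith
    have hn0 : (0 : ℝ) < n := Nat.cast_pos.2 (by omega)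
    rw [hp, div_add_one hd.ne']
    exact div_pos (by linarith) hd
  set c := α ^ (p + 1) / (p + 1)
  have hc0 : 0 < c := by positivity
  obtain ⟨R, hR, hneg⟩ := exists_integral_comp_smul_add_mul_bubbleWeight_neg (ν := volume)
    (k := n) (by omega) hb ha hc
  have hw : Integrable fun y : EuclideanSpace ℝ (Fin n) => (1 + ‖y‖) * (c * bubbleWeight n y) := by
    simpa only [mul_left_comm] using
      (integrable_one_add_norm_mul_bubbleWeight volume hdim).const_mul c
  refine ⟨R, hR, fun μ ξ hμξ => ?_⟩
  simp_rw [Gam_eq_integral hγn hp hα.le]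
  rw [fderiv_integral_comp_smul_add_apply_self (hK.of_le one_le_two) hKb
    (hKgb.imp fun C hC x => (norm_fderiv_eq_norm_gradient K x).trans_le (hC x))
    (by fun_prop : Continuous fun y => c * bubbleWeight n y).aestronglyMeasurable hw]
  simp_rw [← inner_gradient_left, mul_left_comm _ c, integral_const_mul]
  exact mul_neg_of_pos_of_neg hc0 (hneg μ ξ hμξ)

/-- `⟨∇Γ(μ,ξ), (μ,ξ)⟩` is expressed as the Fréchet derivative of the uncurried `Γ`
applied to the vector `(μ, ξ)`. -/
theorem stmt6 (n : ℕ) (hn : 2 ≤ n) (γ : ℝ) (hγ : 0 < γ) (hγn : γ < (n : ℝ) / 2)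
    (p : ℝ) (hp : p = ((n : ℝ) + 2 * γ) / ((n : ℝ) - 2 * γ))
    (α : ℝ) (hα : 0 < α)
    (K : EuclideanSpace ℝ (Fin n) → ℝ) (hK : ContDiff ℝ 2 K)
    (hKb : ∃ C, ∀ x, |K x| ≤ C)
    (hKgb : ∃ C, ∀ x, ‖gradient K x‖ ≤ C)
    (η : ℝ) (hη : 0 < η)
    (ha : ∀ x : EuclideanSpace ℝ (Fin n), η ≤ ‖x‖ → ⟪gradient K x, x⟫ < 0)
    (hb : Integrable (fun x : EuclideanSpace ℝ (Fin n) => ⟪gradient K x, x⟫))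
    (hc : (∫ x : EuclideanSpace ℝ (Fin n), ⟪gradient K x, x⟫) < 0) :
    ∃ R > 0, ∀ (μ : ℝ) (ξ : EuclideanSpace ℝ (Fin n)), R ≤ |μ| + ‖ξ‖ →
      fderiv ℝ (fun q : ℝ × EuclideanSpace ℝ (Fin n) => Gam n γ α p K q.1 q.2) (μ, ξ) (μ, ξ)
        < 0 :=
  stmt6_general n hn γ hγn p hp α hα K hK hKb hKgb η ha hb hc
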